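/- Let f : ℝ^d → ℝ be differentiable, convex, and M-component-smooth with minimizer w⋆ and minimum value f⋆, let S be a nonvacuous and proper random subset of [d] with sketch C = I_S P⁻¹, let η have conditional law N(0, σ_S² I_d) given S, and take step sizes Γ = P M⁻¹. Then for every α ∈ (0,1) and every fixed θ ∈ ℝ^d, the step θ⁺ = θ − Γ C(∇f(θ) + η) satisfies E[f(θ⁺)] − f⋆ − (1−α)(f(θ) − f⋆) ≤ α( ‖θ − w⋆‖_{Γ⁻¹}² − E[‖θ⁺ − w⋆‖_{Γ⁻¹}²] ) + ((2α+1)/2) · E[‖C σ_S 1‖_{P M⁻¹}²]. -/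

import Mathlib

open MeasureTheory ProbabilityTheory

/-- The law of `η` conditionally on `S = U`: coordinates i.i.d. `N(0, s²)` where `s = σ_U`. -/
noncomputable def gpi (d : ℕ) (s : ℝ) : Measure (Fin d → ℝ) :=
  Measure.pi fun _ => gaussianReal 0 (Real.toNNReal (s ^ 2))

/-- Expectation of `g(S, η)` where `S = U` with probability `q U` and,
conditionally on `S = U`, `η ~ N(0, σ_U² I_d)`. -/
noncomputable def Exp {d : ℕ} (q σ : Finset (Fin d) → ℝ)
    (g : Finset (Fin d) → (Fin d → ℝ) → ℝ) : ℝ :=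
  ∑ U : Finset (Fin d), q U * ∫ y, g U y ∂(gpi d (σ U))

/-!
Conditionally on `S = U`, each quantity in the statement is a constant plus a sum over `j ∈ U` of
quadratics in the independent centred Gaussians `η_j`, so its expectation only involves
`E η_j = 0` and `E η_j² = σ_U²`; averaging over `U` then turns `∑_{j ∈ U}` into `∑_j p_j`.
With `g = ∇f(θ)`, component smoothness along the step bounds `E f(θ⁺)` by
`f(θ) - ½ ∑_j p_j g_j² / M_j` plus half the noise term (as `p_j ≤ 1`), while
`E ‖θ⁺ - w⋆‖²_{Γ⁻¹} = ‖θ - w⋆‖²_{Γ⁻¹} - 2⟨g, θ - w⋆⟩ + ‖g‖²_{M⁻¹} + noise` exactly. Convexity and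
smoothness at the minimiser give `f(θ) - f⋆ ≤ ⟨g, θ - w⋆⟩ - ½ ‖g‖²_{M⁻¹}`, and together with
`f(θ) ≥ f⋆` the claim is a nonnegative combination of these facts.
-/

open scoped NNReal InnerProductSpace

lemma integral_sq_gaussianReal_zero (v : ℝ≥0) : ∫ x, x ^ 2 ∂gaussianReal 0 v = v := by
  simpa using (variance_of_integral_eq_zero measurable_id.aemeasurable
    (integral_id_gaussianReal (μ := 0) (v := v))).symm.trans variance_id_gaussianReal

lemma integrable_id_gaussianReal (μ : ℝ) (v : ℝ≥0) : Integrable (fun x => x) (gaussianReal μ v) :=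
  memLp_one_iff_integrable.mp (memLp_id_gaussianReal 1)

lemma integrable_sq_gaussianReal (μ : ℝ) (v : ℝ≥0) :
    Integrable (fun x => x ^ 2) (gaussianReal μ v) :=
  (memLp_id_gaussianReal 2).integrable_sq

lemma integrable_quadratic_gaussianReal (μ : ℝ) (v : ℝ≥0) (a b c : ℝ) :
    Integrable (fun x => a + b * x + c * x ^ 2) (gaussianReal μ v) :=
  ((integrable_const a).add ((integrable_id_gaussianReal μ v).const_mul b)).add
    ((integrable_sq_gaussianReal μ v).const_mul c)

lemma integral_quadratic_gaussianReal (v : ℝ≥0) (a b c : ℝ) :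
    ∫ x, a + b * x + c * x ^ 2 ∂gaussianReal 0 v = a + c * v := by
  have hlin := (integrable_id_gaussianReal 0 v).const_mul b
  have hsq := (integrable_sq_gaussianReal 0 v).const_mul c
  rw [integral_add (f := fun x => a + b * x) ((integrable_const a).add hlin) hsq,
    integral_add (integrable_const a) hlin, integral_const_mul, integral_const_mul,
    integral_id_gaussianReal, integral_sq_gaussianReal_zero]
  simp

section Marginal

variable {ι : Type*} [Fintype ι] {X : ι → Type*} [∀ i, MeasurableSpace (X i)]
  {μ : ∀ i, Measure (X i)} [∀ i, IsProbabilityMeasure (μ i)] {i : ι} {g : X i → ℝ}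

lemma integral_comp_eval_pi (hg : AEStronglyMeasurable g (μ i)) :
    ∫ y, g (y i) ∂Measure.pi μ = ∫ x, g x ∂μ i := by
  rw [← (measurePreserving_eval μ i).map_eq] at hg ⊢
  exact (integral_map (measurable_pi_apply i).aemeasurable hg).symm

lemma MeasureTheory.Integrable.comp_eval_pi (hg : Integrable g (μ i)) :
    Integrable (fun y => g (y i)) (Measure.pi μ) := by
  rw [← (measurePreserving_eval μ i).map_eq] at hg
  exact hg.comp_measurable (measurable_pi_apply i)

end Marginal


instance (d : ℕ) (s : ℝ) : IsProbabilityMeasure (gpi d s) := by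
  rw [gpi]
  infer_instance

section GaussianNoise

variable {d : ℕ} (s : ℝ) (U : Finset (Fin d)) (a b c : Fin d → ℝ)

lemma integrable_quadratic_gpi (j : Fin d) :
    Integrable (fun y => a j + b j * y j + c j * y j ^ 2) (gpi d s) :=
  (integrable_quadratic_gaussianReal 0 (s ^ 2).toNNReal (a j) (b j) (c j)).comp_eval_pi
    (μ := fun _ : Fin d => gaussianReal 0 (s ^ 2).toNNReal) (i := j)

lemma integrable_sum_quadratic_gpi :
    Integrable (fun y => ∑ j ∈ U, (a j + b j * y j + c j * y j ^ 2)) (gpi d s) :=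
  integrable_finsetSum U fun j _ => integrable_quadratic_gpi s a b c j

lemma integral_sum_quadratic_gpi :
    ∫ y, ∑ j ∈ U, (a j + b j * y j + c j * y j ^ 2) ∂gpi d s = ∑ j ∈ U, (a j + c j * s ^ 2) := by
  rw [integral_finsetSum U fun j _ => integrable_quadratic_gpi s a b c j]
  refine Finset.sum_congr rfl fun j _ => ?_
  rw [gpi, integral_comp_eval_pi (μ := fun _ : Fin d => gaussianReal 0 (s ^ 2).toNNReal) (i := j)
      (integrable_quadratic_gaussianReal 0 (s ^ 2).toNNReal (a j) (b j) (c j)).aestronglyMeasurable,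
    integral_quadratic_gaussianReal, Real.coe_toNNReal _ (sq_nonneg s)]

end GaussianNoise

section InclusionWeights

variable {ι : Type*} [Fintype ι] [DecidableEq ι]

lemma sum_mul_sum_mem_eq (q : Finset ι → ℝ) (x : ι → ℝ) :
    ∑ U, q U * ∑ j ∈ U, x j = ∑ j, (∑ U, if j ∈ U then q U else 0) * x j := by
  calc ∑ U, q U * ∑ j ∈ U, x j = ∑ U, ∑ j, if j ∈ U then q U * x j else 0 :=
        Finset.sum_congr rfl fun U _ => by rw [Finset.mul_sum, Fintype.sum_ite_mem]
    _ = ∑ j, (∑ U, if j ∈ U then q U else 0) * x j := by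
        rw [Finset.sum_comm]
        simp only [Finset.sum_mul, ite_mul, zero_mul]

lemma sum_ite_mem_le_one {q : Finset ι → ℝ} (hq0 : ∀ U, 0 ≤ q U) (hq1 : ∑ U, q U = 1) (j : ι) :
    ∑ U, (if j ∈ U then q U else 0) ≤ 1 :=
  hq1 ▸ Finset.sum_le_sum fun U _ => by split_ifs <;> simp [hq0 U]

end InclusionWeights

namespace Exp

variable {d : ℕ} {q σ : Finset (Fin d) → ℝ}

lemma mono (hq : ∀ U, 0 ≤ q U) {F G : Finset (Fin d) → (Fin d → ℝ) → ℝ}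
    (hF : ∀ U, Integrable (F U) (gpi d (σ U))) (hG : ∀ U, Integrable (G U) (gpi d (σ U)))
    (hFG : ∀ U y, F U y ≤ G U y) : Exp q σ F ≤ Exp q σ G :=
  Finset.sum_le_sum fun U _ =>
    mul_le_mul_of_nonneg_left (integral_mono (hF U) (hG U) (hFG U)) (hq U)

lemma const_add_sum_mem_quadratic {p : Fin d → ℝ} (hq1 : ∑ U, q U = 1)
    (hp : ∀ j, p j = ∑ U, if j ∈ U then q U else 0) (K : ℝ) (a b c : Fin d → ℝ) :
    Exp q σ (fun U y => K + ∑ j ∈ U, (a j + b j * y j + c j * y j ^ 2))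
      = K + ∑ j, p j * a j + ∑ U, q U * (σ U ^ 2 * ∑ j ∈ U, c j) := by
  have hcond (U : Finset (Fin d)) :
      ∫ y, K + ∑ j ∈ U, (a j + b j * y j + c j * y j ^ 2) ∂gpi d (σ U)
        = K + ∑ j ∈ U, a j + σ U ^ 2 * ∑ j ∈ U, c j := by
    rw [integral_add (integrable_const K) (integrable_sum_quadratic_gpi _ U a b c),
      integral_sum_quadratic_gpi, integral_const, Finset.sum_add_distrib, Finset.mul_sum]
    simp only [probReal_univ, smul_eq_mul, one_mul, mul_comm (c _), add_assoc]
  rw [Exp, Finset.sum_congr rfl fun U _ => by rw [hcond U]]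
  simp only [mul_add, Finset.sum_add_distrib, ← Finset.sum_mul, hq1, one_mul, sum_mul_sum_mem_eq,
    ← hp]

end Exp

section ConvexGradient

variable {E : Type*} [NormedAddCommGroup E] [InnerProductSpace ℝ E] [CompleteSpace E]
  {f : E → ℝ} {g x : E}

theorem IsLocalMin.hasGradientAt_eq_zero (h : IsLocalMin f x) (hf : HasGradientAt f g x) :
    g = 0 := by
  simpa using h.hasFDerivAt_eq_zero (hasGradientAt_iff_hasFDerivAt.mp hf)

theorem ConvexOn.inner_gradient_le_sub (hf : ConvexOn ℝ Set.univ f) (hg : HasGradientAt f g x)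
    (w : E) : ⟪g, w - x⟫_ℝ ≤ f w - f x := by
  have hline : ConvexOn ℝ Set.univ (f ∘ AffineMap.lineMap (k := ℝ) x w) := hf.comp_affineMap _
  have hderiv : HasDerivAt (f ∘ AffineMap.lineMap (k := ℝ) x w) ⟪g, w - x⟫_ℝ 0 := by
    simpa using (hasGradientAt_iff_hasFDerivAt.mp hg).comp_hasDerivAt_of_eq 0
      AffineMap.hasDerivAt_lineMap (by simp)
  simpa [slope_def_field] using hline.le_slope_of_hasDerivAt trivial trivial zero_lt_one hderiv

end ConvexGradient

/-- `θ⁺ = θ - Γ C (g + η)` on the event `S = U`, noise `η = y`, written coordinatewise with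
`Γ = P M⁻¹` and `C = I_U P⁻¹`. -/
noncomputable abbrev sketchedStep {d : ℕ} (θ g : EuclideanSpace ℝ (Fin d)) (p M : Fin d → ℝ)
    (U : Finset (Fin d)) (y : Fin d → ℝ) : EuclideanSpace ℝ (Fin d) :=
  WithLp.toLp 2 fun j => θ j - (p j / M j) * (if j ∈ U then (g j + y j) / p j else 0)

section SketchedStep

variable {d : ℕ} {p M : Fin d → ℝ} (θ g : EuclideanSpace ℝ (Fin d)) (U : Finset (Fin d))
  (y : Fin d → ℝ)

lemma continuous_sketchedStep : Continuous (sketchedStep θ g p M U) :=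
  (PiLp.continuous_toLp 2 _).comp (continuous_pi fun j => by split_ifs <;> fun_prop)

lemma sketchedStep_apply {j : Fin d} (hp : p j ≠ 0) :
    sketchedStep θ g p M U y j = θ j - if j ∈ U then (g j + y j) / M j else 0 := by
  split_ifs
  · simp only [if_pos ‹j ∈ U›]
    field_simp
  · simp [‹j ∉ U›]

lemma sum_weighted_sq_sketchedStep_sub (hp : ∀ j, p j ≠ 0) (hM : ∀ j, M j ≠ 0)
    (w : EuclideanSpace ℝ (Fin d)) :
    ∑ j, M j / p j * (sketchedStep θ g p M U y j - w j) ^ 2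
      = ∑ j, M j / p j * (θ j - w j) ^ 2
        + ∑ j ∈ U, ((g j ^ 2 / M j - 2 * (g j * (θ j - w j))) / p j
          + 2 * (g j / M j - (θ j - w j)) / p j * y j + 1 / (p j * M j) * y j ^ 2) := by
  rw [← Fintype.sum_ite_mem U, ← Finset.sum_add_distrib]
  refine Finset.sum_congr rfl fun j _ => ?_
  rw [sketchedStep_apply θ g U y (hp j)]
  split_ifs
  · field_simp [hp j, hM j]
    ring
  · simp

end SketchedStep

lemma exp_sum_weighted_sq_sketchedStep_sub {d : ℕ} {q σ : Finset (Fin d) → ℝ}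
    {p M : Fin d → ℝ} (hq1 : ∑ U, q U = 1) (hpdef : ∀ j, p j = ∑ U, if j ∈ U then q U else 0)
    (hp : ∀ j, p j ≠ 0) (hM : ∀ j, M j ≠ 0) (θ g w : EuclideanSpace ℝ (Fin d)) :
    Exp q σ (fun U y => ∑ j, M j / p j * (sketchedStep θ g p M U y j - w j) ^ 2)
      = ∑ j, M j / p j * (θ j - w j) ^ 2 + ∑ j, (g j ^ 2 / M j - 2 * (g j * (θ j - w j)))
        + ∑ U, q U * (σ U ^ 2 * ∑ j ∈ U, 1 / (p j * M j)) := by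
  simp_rw [sum_weighted_sq_sketchedStep_sub θ g _ _ hp hM]
  rw [Exp.const_add_sum_mem_quadratic hq1 hpdef]
  congr 2
  exact Finset.sum_congr rfl fun j _ => mul_div_cancel₀ _ (hp j)

def ComponentSmooth {d : ℕ} (f : EuclideanSpace ℝ (Fin d) → ℝ)
    (gradf : EuclideanSpace ℝ (Fin d) → EuclideanSpace ℝ (Fin d)) (M : Fin d → ℝ) : Prop :=
  ∀ v w : EuclideanSpace ℝ (Fin d),
    f w ≤ f v + (∑ j : Fin d, gradf v j * (w j - v j)) + (1 / 2) * ∑ j : Fin d, M j * (w j - v j) ^ 2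

namespace ComponentSmooth

variable {d : ℕ} {f : EuclideanSpace ℝ (Fin d) → ℝ}
  {gradf : EuclideanSpace ℝ (Fin d) → EuclideanSpace ℝ (Fin d)} {M p : Fin d → ℝ}

/-- Compare the smoothness upper bound at `w` with the convexity lower bound at `θ`, both taken at
`z = w + M⁻¹ (∇f θ - ∇f w)`. -/
theorem sub_le_of_convexOn (hsm : ComponentSmooth f gradf M) (hM : ∀ j, M j ≠ 0)
    (hconv : ConvexOn ℝ Set.univ f) {θ : EuclideanSpace ℝ (Fin d)}
    (hθ : HasGradientAt f (gradf θ) θ) (w : EuclideanSpace ℝ (Fin d)) :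
    f θ - f w ≤ ∑ j, gradf θ j * (θ j - w j) - 1 / 2 * ∑ j, (gradf θ j - gradf w j) ^ 2 / M j := by
  set z : EuclideanSpace ℝ (Fin d) := WithLp.toLp 2 fun j => w j + (gradf θ j - gradf w j) / M j
  have hupper := hsm w z
  have hlower := hconv.inner_gradient_le_sub hθ z
  have hcoord (j : Fin d) : gradf w j * (z j - w j) + 1 / 2 * (M j * (z j - w j) ^ 2)
      - gradf θ j * (z j - θ j)
      = gradf θ j * (θ j - w j) - 1 / 2 * ((gradf θ j - gradf w j) ^ 2 / M j) := by
    simp only [z]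
    field_simp [hM j]
    ring
  have hsum := Finset.sum_congr rfl fun j (_ : j ∈ Finset.univ) => hcoord j
  simp only [Finset.sum_sub_distrib, Finset.sum_add_distrib, ← Finset.mul_sum] at hsum
  simp only [PiLp.inner_apply, PiLp.sub_apply, RCLike.inner_apply, conj_trivial,
    mul_comm (z _ - θ _)] at hlower
  linarith

lemma apply_sketchedStep_le (hsm : ComponentSmooth f gradf M) (hp : ∀ j, p j ≠ 0)
    (hM : ∀ j, M j ≠ 0) (θ : EuclideanSpace ℝ (Fin d)) (U : Finset (Fin d)) (y : Fin d → ℝ) :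
    f (sketchedStep θ (gradf θ) p M U y)
      ≤ f θ + ∑ j ∈ U, (-(gradf θ j ^ 2 / (2 * M j)) + 0 * y j + 1 / (2 * M j) * y j ^ 2) := by
  refine (hsm θ (sketchedStep θ (gradf θ) p M U y)).trans_eq ?_
  rw [add_assoc, Finset.mul_sum, ← Finset.sum_add_distrib, ← Fintype.sum_ite_mem U]
  congr 1
  refine Finset.sum_congr rfl fun j _ => ?_
  rw [sketchedStep_apply θ _ U y (hp j)]
  split_ifs
  · field_simp [hM j]
    ring
  · simp

lemma integrable_apply_sketchedStep (hsm : ComponentSmooth f gradf M) (hf : Continuous f)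
    (hbdd : BddBelow (Set.range f)) (hp : ∀ j, p j ≠ 0) (hM : ∀ j, M j ≠ 0)
    (θ : EuclideanSpace ℝ (Fin d)) (U : Finset (Fin d)) (s : ℝ) :
    Integrable (fun y => f (sketchedStep θ (gradf θ) p M U y)) (gpi d s) := by
  obtain ⟨m, hm⟩ := hbdd
  exact integrable_of_le_of_le (hf.comp (continuous_sketchedStep θ _ U)).aestronglyMeasurable
    (ae_of_all _ fun y => hm ⟨_, rfl⟩) (ae_of_all _ (hsm.apply_sketchedStep_le hp hM θ U))
    (integrable_const m) ((integrable_const _).add (integrable_sum_quadratic_gpi s U _ _ _))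

theorem exp_apply_sketchedStep_le (hsm : ComponentSmooth f gradf M) (hf : Continuous f)
    (hbdd : BddBelow (Set.range f)) {q σ : Finset (Fin d) → ℝ} (hq0 : ∀ U, 0 ≤ q U)
    (hq1 : ∑ U, q U = 1) (hpdef : ∀ j, p j = ∑ U, if j ∈ U then q U else 0)
    (hp : ∀ j, p j ≠ 0) (hM : ∀ j, M j ≠ 0) (θ : EuclideanSpace ℝ (Fin d)) :
    Exp q σ (fun U y => f (sketchedStep θ (gradf θ) p M U y))
      ≤ f θ + ∑ j, p j * -(gradf θ j ^ 2 / (2 * M j))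
        + ∑ U, q U * (σ U ^ 2 * ∑ j ∈ U, 1 / (2 * M j)) := by
  rw [← Exp.const_add_sum_mem_quadratic hq1 hpdef (f θ) _ (fun _ => 0)]
  exact Exp.mono hq0 (fun U => hsm.integrable_apply_sketchedStep hf hbdd hp hM θ U _)
    (fun U => (integrable_const _).add (integrable_sum_quadratic_gpi _ U _ _ _))
    (hsm.apply_sketchedStep_le hp hM θ)

end ComponentSmooth

lemma sum_noise_le_half {d : ℕ} {q σ : Finset (Fin d) → ℝ} {p M : Fin d → ℝ}
    (hq0 : ∀ U, 0 ≤ q U) (hp : ∀ j, 0 < p j) (hp1 : ∀ j, p j ≤ 1) (hM : ∀ j, 0 < M j) :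
    ∑ U, q U * (σ U ^ 2 * ∑ j ∈ U, 1 / (2 * M j))
      ≤ 1 / 2 * ∑ U, q U * (σ U ^ 2 * ∑ j ∈ U, 1 / (p j * M j)) := by
  calc ∑ U, q U * (σ U ^ 2 * ∑ j ∈ U, 1 / (2 * M j))
      ≤ ∑ U, q U * (σ U ^ 2 * ∑ j ∈ U, 1 / 2 * (1 / (p j * M j))) := by
        gcongr with U _ j _
        · exact hq0 U
        · rw [one_div_mul_one_div]
          exact one_div_le_one_div_of_le (mul_pos two_pos (mul_pos (hp j) (hM j)))
            (by nlinarith [hp1 j, hM j])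
    _ = 1 / 2 * ∑ U, q U * (σ U ^ 2 * ∑ j ∈ U, 1 / (p j * M j)) := by
        simp only [Finset.mul_sum, mul_left_comm (1 / 2 : ℝ)]

theorem one_step_progress_general
    (d : ℕ)
    (f : EuclideanSpace ℝ (Fin d) → ℝ)
    (gradf : EuclideanSpace ℝ (Fin d) → EuclideanSpace ℝ (Fin d))
    (hdiff : ∀ x, HasGradientAt f (gradf x) x)
    (hconv : ConvexOn ℝ Set.univ f)
    (M : Fin d → ℝ) (hM : ∀ j, 0 < M j)
    (hsmooth : ∀ v w : EuclideanSpace ℝ (Fin d),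
      f w ≤ f v + (∑ j : Fin d, gradf v j * (w j - v j))
        + (1 / 2) * ∑ j : Fin d, M j * (w j - v j) ^ 2)
    (wstar : EuclideanSpace ℝ (Fin d)) (hmin : ∀ w, f wstar ≤ f w)
    (q : Finset (Fin d) → ℝ) (hq0 : ∀ U, 0 ≤ q U) (hq1 : ∑ U : Finset (Fin d), q U = 1)
    (p : Fin d → ℝ)
    (hpdef : ∀ j, p j = ∑ U : Finset (Fin d), if j ∈ U then q U else 0)
    (hp : ∀ j, 0 < p j)
    (σ : Finset (Fin d) → ℝ)
    (α : ℝ) (hα : α ∈ Set.Ioo (0 : ℝ) 1)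
    (θ : EuclideanSpace ℝ (Fin d)) :
    Exp q σ (fun U y =>
        f (WithLp.toLp 2 (fun j => θ j - (p j / M j) * (if j ∈ U then (gradf θ j + y j) / p j else 0))))
      - f wstar - (1 - α) * (f θ - f wstar)
      ≤ α * ((∑ j : Fin d, (M j / p j) * (θ j - wstar j) ^ 2)
          - Exp q σ (fun U y => ∑ j : Fin d,
              (M j / p j) *
                ((θ j - (p j / M j) * (if j ∈ U then (gradf θ j + y j) / p j else 0))
                  - wstar j) ^ 2))
        + ((2 * α + 1) / 2) *
            ∑ U : Finset (Fin d), q U * ((σ U) ^ 2 * ∑ j ∈ U, 1 / (p j * M j)) := by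
  have hp0 (j : Fin d) : p j ≠ 0 := (hp j).ne'
  have hM0 (j : Fin d) : M j ≠ 0 := (hM j).ne'
  have hcont : Continuous f := continuous_iff_continuousAt.2 fun x => (hdiff x).continuousAt
  have hbdd : BddBelow (Set.range f) := ⟨f wstar, Set.forall_mem_range.2 hmin⟩
  have hgrad_min : gradf wstar = 0 :=
    IsLocalMin.hasGradientAt_eq_zero (Filter.Eventually.of_forall hmin) (hdiff wstar)
  have hgap := ComponentSmooth.sub_le_of_convexOn hsmooth hM0 hconv (hdiff θ) wstar
  simp only [hgrad_min, PiLp.zero_apply, sub_zero] at hgap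
  have hvalue := ComponentSmooth.exp_apply_sketchedStep_le (σ := σ) hsmooth hcont hbdd hq0 hq1
    hpdef hp0 hM0 θ
  have hdist := exp_sum_weighted_sq_sketchedStep_sub (σ := σ) hq1 hpdef hp0 hM0 θ (gradf θ) wstar
  have hnoise := sum_noise_le_half (σ := σ) hq0 hp
    (fun j => hpdef j ▸ sum_ite_mem_le_one hq0 hq1 j) hM
  have hdescent : ∑ j, p j * -(gradf θ j ^ 2 / (2 * M j)) ≤ 0 :=
    Finset.sum_nonpos fun j _ => mul_nonpos_of_nonneg_of_nonpos (hp j).le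
      (neg_nonpos.2 (div_nonneg (sq_nonneg _) (by linarith [hM j])))
  rw [Finset.sum_sub_distrib, ← Finset.mul_sum] at hdist
  rw [hdist]
  nlinarith [mul_nonneg hα.1.le (sub_nonneg.2 hgap), mul_nonneg hα.1.le (sub_nonneg.2 (hmin θ))]

/-- One-step progress lemma with step sizes `Γ = P M⁻¹` (so `γ_j = p_j / M_j` and
`Γ⁻¹ = M P⁻¹`): for every `α ∈ (0,1)`,
`E[f(θ⁺)] − f⋆ − (1−α)(f(θ) − f⋆)
  ≤ α(‖θ − w⋆‖_{Γ⁻¹}² − E[‖θ⁺ − w⋆‖_{Γ⁻¹}²]) + ((2α+1)/2) E[‖C σ_S 1‖_{P M⁻¹}²]`. -/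
theorem one_step_progress
    (d : ℕ) (hd : 1 ≤ d)
    (f : EuclideanSpace ℝ (Fin d) → ℝ)
    (gradf : EuclideanSpace ℝ (Fin d) → EuclideanSpace ℝ (Fin d))
    (hdiff : ∀ x, HasGradientAt f (gradf x) x)
    (hconv : ConvexOn ℝ Set.univ f)
    (M : Fin d → ℝ) (hM : ∀ j, 0 < M j)
    (hsmooth : ∀ v w : EuclideanSpace ℝ (Fin d),
      f w ≤ f v + (∑ j : Fin d, gradf v j * (w j - v j))
        + (1 / 2) * ∑ j : Fin d, M j * (w j - v j) ^ 2)
    (wstar : EuclideanSpace ℝ (Fin d)) (hmin : ∀ w, f wstar ≤ f w)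
    (q : Finset (Fin d) → ℝ) (hq0 : ∀ U, 0 ≤ q U) (hq1 : ∑ U : Finset (Fin d), q U = 1)
    (hempty : q ∅ = 0)
    (p : Fin d → ℝ)
    (hpdef : ∀ j, p j = ∑ U : Finset (Fin d), if j ∈ U then q U else 0)
    (hp : ∀ j, 0 < p j)
    (σ : Finset (Fin d) → ℝ) (hσ : ∀ U, q U ≠ 0 → 0 < σ U)
    (α : ℝ) (hα : α ∈ Set.Ioo (0 : ℝ) 1)
    (θ : EuclideanSpace ℝ (Fin d)) :
    Exp q σ (fun U y =>
        f (WithLp.toLp 2 (fun j => θ j - (p j / M j) * (if j ∈ U then (gradf θ j + y j) / p j else 0))))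
      - f wstar - (1 - α) * (f θ - f wstar)
      ≤ α * ((∑ j : Fin d, (M j / p j) * (θ j - wstar j) ^ 2)
          - Exp q σ (fun U y => ∑ j : Fin d,
              (M j / p j) *
                ((θ j - (p j / M j) * (if j ∈ U then (gradf θ j + y j) / p j else 0))
                  - wstar j) ^ 2))
        + ((2 * α + 1) / 2) *
            ∑ U : Finset (Fin d), q U * ((σ U) ^ 2 * ∑ j ∈ U, 1 / (p j * M j)) :=
  one_step_progress_general d f gradf hdiff hconv M hM hsmooth wstar hmin q hq0 hq1 p hpdef hp σ α
    hα θ
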